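/- arXiv:math/0511081 — 2 statements merged into one kernel-verified Lean document; each statement's English description precedes it below -/
import Mathlib

section
/- The Reeb section R_h of the cosymplectic structure (Ω_h, η) on T^Ã V*, characterized by i_{R_h} Ω_h = 0 and i_{R_h} η = 1, exists, is unique, and is locally given by R_h = ẽ_0 + (∂H/∂y_α) ẽ_α − (C^γ_{αβ} y_γ ∂H/∂y_β + ρ^i_α ∂H/∂x^i − C^γ_{0α} y_γ) ē_α in the adapted local basis {ẽ_0, ẽ_α, ē_α}. -/
noncomputable section

/-- Partial derivative in the `j`-th coordinate direction of a function on `ℝ^m`. -/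
def pd {m : ℕ} (j : Fin m) (f : (Fin m → ℝ) → ℝ) (x : Fin m → ℝ) : ℝ :=
  fderiv ℝ f x (Pi.single j 1)

/-- A Lie algebroid of rank `k` over `M = ℝ^m` in coordinates (trivialized by a basis
`{e_a}` of sections): structure functions `ρ_a^i` (anchor) and `C_{ab}^g` (bracket),
smooth, antisymmetric, satisfying the structure equations expressing that the anchor
is bracket-compatible and that the Jacobi identity holds. -/
structure CoordLieAlgebroid (m k : ℕ) where
  ρ : (Fin m → ℝ) → Fin k → Fin m → ℝ
  c : (Fin m → ℝ) → Fin k → Fin k → Fin k → ℝ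
  smooth_ρ : ∀ a i, ContDiff ℝ (⊤ : ℕ∞) fun x => ρ x a i
  smooth_c : ∀ a b g, ContDiff ℝ (⊤ : ℕ∞) fun x => c x a b g
  c_antisymm : ∀ x a b g, c x a b g = - c x b a g
  anchor_compat : ∀ x a b i,
    (∑ j, (ρ x a j * pd j (fun x' => ρ x' b i) x - ρ x b j * pd j (fun x' => ρ x' a i) x))
      = ∑ g, c x a b g * ρ x g i
  jacobi : ∀ x a b g ν,
    ((∑ i, ρ x a i * pd i (fun x' => c x' b g ν) x) + ∑ μ', c x b g μ' * c x a μ' ν)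
      + ((∑ i, ρ x b i * pd i (fun x' => c x' g a ν) x) + ∑ μ', c x g a μ' * c x b μ' ν)
      + ((∑ i, ρ x g i * pd i (fun x' => c x' a b ν) x) + ∑ μ', c x a b μ' * c x g μ' ν)
      = 0

/- Setup for Lie affgebroids in local coordinates. A Lie affgebroid `A` over `M = ℝ^m`
modelled on a rank-`n` vector bundle `V` is encoded through its bidual Lie algebroid
`Ã` of rank `n+1`, trivialized by a local basis `{e_0, e_α}` adapted to the 1-cocycle
`1_A` (`1_A(e_0) = 1`, `1_A(e_α) = 0`); the cocycle condition `d^Ã 1_A = 0` reads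
`C_{ab}^0 = 0`. Indices `a : Fin (n+1)`, `0 = e_0`, `α.succ = e_α`. -/
namespace Aff

variable {m n : ℕ}

/-- The dual `V*` of the model vector bundle, with coordinates `(x^i, y_α)`. -/
abbrev VStar (m n : ℕ) := (Fin m → ℝ) × (Fin n → ℝ)

/-- The fibre of the prolongation `T^Ã V* = {(ã,v) : ρ_Ã(ã) = Tτ_V^*(v)}`:
coordinates `(z^0, z^α, v_α)` w.r.t. the adapted basis `{ẽ_0, ẽ_α, ē_α}`. -/
abbrev AFib (n : ℕ) := (Fin (n + 1) → ℝ) × (Fin n → ℝ)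

/-- Sections of the prolongation `T^Ã V* → V*`. -/
abbrev ASec (m n : ℕ) := VStar m n → AFib n

/-- The anchor `ρ_Ã^{τ_V^*}` of the prolongation, as a tangent vector to `V*`. -/
def avec (L : CoordLieAlgebroid m (n + 1)) (p : VStar m n) (w : AFib n) :
    (Fin m → ℝ) × (Fin n → ℝ) :=
  (fun i => ∑ a, w.1 a * L.ρ p.1 a i, w.2)

/-- The anchor of a prolongation section applied, as a vector field on `V*`, to a
function on `V*`. -/
def aD (L : CoordLieAlgebroid m (n + 1)) (ξ : ASec m n) (F : VStar m n → ℝ)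
    (p : VStar m n) : ℝ :=
  fderiv ℝ F p (avec L p (ξ p))

/-- The Lie bracket of the prolongation Lie algebroid `T^Ã V*` in the adapted basis. -/
def aBracket (L : CoordLieAlgebroid m (n + 1)) (ξ ζ : ASec m n) : ASec m n := fun p =>
  ( fun g => aD L ξ (fun q => (ζ q).1 g) p - aD L ζ (fun q => (ξ q).1 g) p
      + ∑ a, ∑ b, L.c p.1 a b g * (ξ p).1 a * (ζ p).1 b,
    fun g => aD L ξ (fun q => (ζ q).2 g) p - aD L ζ (fun q => (ξ q).2 g) p )

/-- The 1-cocycle `η = (pr_1, τ_V^*)^*(1_A)` of `T^Ã V*`: `η(ã, X) = 1_A(ã)`. -/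
def etaSec (ξ : ASec m n) : VStar m n → ℝ := fun p => (ξ p).1 0

/-- The section `λ_h = (Th, h)^*(λ_Ã)` of `(T^Ã V*)*` associated with the Hamiltonian
section `h(x^i, y_α) = (x^i, −H(x,y), y_α)`: `λ_h(p)(ã, X) = h(p)(ã)`, i.e.
`λ_h = −H ẽ^0 + y_α ẽ^α`. -/
def lambdah (H : VStar m n → ℝ) (ξ : ASec m n) : VStar m n → ℝ := fun p =>
  -H p * (ξ p).1 0 + ∑ β, p.2 β * (ξ p).1 β.succ

/-- The 2-section `Ω_h = (Th, h)^*(Ω_Ã) = −d^{T^Ã V*} λ_h`, on sections, via the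
Koszul formula. -/
def Omegah (L : CoordLieAlgebroid m (n + 1)) (H : VStar m n → ℝ) (ξ ζ : ASec m n) :
    VStar m n → ℝ := fun p =>
  -(aD L ξ (lambdah H ζ) p - aD L ζ (lambdah H ξ) p
      - lambdah H (aBracket L ξ ζ) p)

/-- Pointwise value of `Ω_h` on the fibre (via constant sections). -/
def OmegahPt (L : CoordLieAlgebroid m (n + 1)) (H : VStar m n → ℝ) (p : VStar m n)
    (w w' : AFib n) : ℝ :=
  Omegah L H (fun _ => w) (fun _ => w') p

/-- `∂H/∂x^i`. -/
def Hx (H : VStar m n → ℝ) (p : VStar m n) (i : Fin m) : ℝ :=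
  fderiv ℝ H p (Pi.single i 1, 0)

/-- `∂H/∂y_β`. -/
def Hy (H : VStar m n → ℝ) (p : VStar m n) (β : Fin n) : ℝ :=
  fderiv ℝ H p (0, Pi.single β 1)

end Aff

open Aff

/-- The local expression of the Reeb section,
`R_h = ẽ_0 + (∂H/∂y_α) ẽ_α − (C_{αβ}^γ y_γ ∂H/∂y_β + ρ_α^i ∂H/∂x^i − C_{0α}^γ y_γ) ē_α`. -/
def ReebForm {m n : ℕ} (L : CoordLieAlgebroid m (n + 1)) (H : VStar m n → ℝ)
    (p : VStar m n) : AFib n :=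
  ( Fin.cons 1 (fun β => Hy H p β),
    fun α => -((∑ γ, ∑ β, L.c p.1 α.succ β.succ γ.succ * p.2 γ * Hy H p β)
        + (∑ i, L.ρ p.1 α.succ i * Hx H p i)
        - ∑ γ, L.c p.1 0 α.succ γ.succ * p.2 γ) )


section Helpers

variable {m n : ℕ}

lemma fderiv_pair {H : VStar m n → ℝ} (p : VStar m n) (v : Fin m → ℝ) (u : Fin n → ℝ) :
    fderiv ℝ H p (v, u) = (∑ i, v i * Hx H p i) + ∑ β, u β * Hy H p β := by
  have hvu : (v, u) = (∑ i, v i • ((Pi.single i 1 : Fin m → ℝ), (0 : Fin n → ℝ)))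
      + ∑ β, u β • ((0 : Fin m → ℝ), (Pi.single β 1 : Fin n → ℝ)) := by
    ext j
    · simp [Prod.fst_sum, Finset.sum_apply, Pi.single_apply]
    · simp [Prod.snd_sum, Finset.sum_apply, Pi.single_apply]
  rw [hvu, map_add, map_sum, map_sum]
  simp only [Hx, Hy]
  congr 1
  · exact Finset.sum_congr rfl fun i _ => by rw [map_smul, smul_eq_mul]
  · exact Finset.sum_congr rfl fun β _ => by rw [map_smul, smul_eq_mul]

lemma lam_fd {H : VStar m n → ℝ} (hH : Differentiable ℝ H)
    (c0 : ℝ) (cs : Fin n → ℝ) (p : VStar m n) (d : (Fin m → ℝ) × (Fin n → ℝ)) :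
    fderiv ℝ (fun q : VStar m n => -H q * c0 + ∑ β, q.2 β * cs β) p d
      = -(fderiv ℝ H p d) * c0 + ∑ β, d.2 β * cs β := by
  have h1 : HasFDerivAt (fun q : VStar m n => -H q * c0 + ∑ β, q.2 β * cs β)
      ((c0 • (-(fderiv ℝ H p))) + ∑ β : Fin n, (cs β) •
        ((ContinuousLinearMap.proj β).comp (ContinuousLinearMap.snd ℝ (Fin m → ℝ) (Fin n → ℝ)))) p := by
    apply HasFDerivAt.add
    · exact ((hH p).hasFDerivAt.neg).mul_const _
    · exact HasFDerivAt.fun_sum fun β _ => (((ContinuousLinearMap.proj β).comp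
        (ContinuousLinearMap.snd ℝ (Fin m → ℝ) (Fin n → ℝ))).hasFDerivAt).mul_const _
  rw [h1.fderiv]
  simp [mul_comm]

lemma omegah_pt (L : CoordLieAlgebroid m (n + 1)) (H : VStar m n → ℝ)
    (hH : Differentiable ℝ H) (p : VStar m n) (w w' : AFib n) :
    OmegahPt L H p w w' =
      ((∑ i, (∑ a, w.1 a * L.ρ p.1 a i) * Hx H p i) + ∑ β, w.2 β * Hy H p β) * w'.1 0
      - (∑ β, w.2 β * w'.1 β.succ)
      - (((∑ i, (∑ a, w'.1 a * L.ρ p.1 a i) * Hx H p i) + ∑ β, w'.2 β * Hy H p β) * w.1 0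
        - (∑ β, w'.2 β * w.1 β.succ))
      + (-H p * (∑ a, ∑ b, L.c p.1 a b 0 * w.1 a * w'.1 b)
        + ∑ γ, p.2 γ * (∑ a, ∑ b, L.c p.1 a b γ.succ * w.1 a * w'.1 b)) := by
  have h1 : aD L (fun _ => w) (lambdah H (fun _ => w')) p
      = -(((∑ i, (∑ a, w.1 a * L.ρ p.1 a i) * Hx H p i) + ∑ β, w.2 β * Hy H p β)) * w'.1 0
        + ∑ β, w.2 β * w'.1 β.succ := by
    show fderiv ℝ (fun q : VStar m n => -H q * w'.1 0 + ∑ β, q.2 β * w'.1 β.succ) p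
        (avec L p w) = _
    rw [lam_fd hH]
    rw [show avec L p w = ((fun i => ∑ a, w.1 a * L.ρ p.1 a i), w.2) from rfl]
    rw [fderiv_pair]
  have h2 : aD L (fun _ => w') (lambdah H (fun _ => w)) p
      = -(((∑ i, (∑ a, w'.1 a * L.ρ p.1 a i) * Hx H p i) + ∑ β, w'.2 β * Hy H p β)) * w.1 0
        + ∑ β, w'.2 β * w.1 β.succ := by
    show fderiv ℝ (fun q : VStar m n => -H q * w.1 0 + ∑ β, q.2 β * w.1 β.succ) p
        (avec L p w') = _
    rw [lam_fd hH]
    rw [show avec L p w' = ((fun i => ∑ a, w'.1 a * L.ρ p.1 a i), w'.2) from rfl]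
    rw [fderiv_pair]
  have h3 : lambdah H (aBracket L (fun _ => w) (fun _ => w')) p
      = -H p * (∑ a, ∑ b, L.c p.1 a b 0 * w.1 a * w'.1 b)
        + ∑ γ, p.2 γ * (∑ a, ∑ b, L.c p.1 a b γ.succ * w.1 a * w'.1 b) := by
    simp [lambdah, aBracket, aD, fderiv_const]
  show -(aD L (fun _ => w) (lambdah H (fun _ => w')) p
      - aD L (fun _ => w') (lambdah H (fun _ => w)) p
      - lambdah H (aBracket L (fun _ => w) (fun _ => w')) p) = _
  rw [h1, h2, h3]
  ring


lemma sum_congr' {k : ℕ} {f g : Fin k → ℝ} (h : ∀ b, f b = g b) :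
    ∑ b, f b = ∑ b, g b := Finset.sum_congr rfl fun b _ => h b

lemma double_antisym {k : ℕ} (f : Fin k → Fin k → ℝ) (hf : ∀ a b, f a b = -f b a) :
    ∑ a, ∑ b, f a b = 0 := by
  have h2 := Finset.sum_comm (s := Finset.univ) (t := Finset.univ) (f := f)
  have h3 : ∑ a, ∑ b, f a b = - ∑ a, ∑ b, f a b := by
    nth_rewrite 2 [h2]
    simp only [← Finset.sum_neg_distrib]
    exact Finset.sum_congr rfl fun a _ => Finset.sum_congr rfl fun b _ => hf a b
  linarith

lemma expand_anchor (v : Fin (n + 1) → ℝ) (g : Fin (n + 1) → Fin m → ℝ) (A : Fin m → ℝ) :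
    ∑ i, (∑ a, v a * g a i) * A i
      = v 0 * (∑ i, g 0 i * A i) + ∑ β : Fin n, v β.succ * (∑ i, g β.succ i * A i) := by
  calc ∑ i, (∑ a, v a * g a i) * A i
      = ∑ i, ∑ a, v a * (g a i * A i) := by
        refine Finset.sum_congr rfl fun i _ => ?_
        rw [Finset.sum_mul]
        exact Finset.sum_congr rfl fun a _ => by ring
    _ = ∑ a, ∑ i, v a * (g a i * A i) := Finset.sum_comm
    _ = ∑ a, v a * ∑ i, g a i * A i := by
        exact Finset.sum_congr rfl fun a _ => (Finset.mul_sum _ _ _).symm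
    _ = _ := by rw [Fin.sum_univ_succ]

lemma expand_bracket {k : ℕ} (c' : Fin (k + 1) → Fin (k + 1) → ℝ) (v u : Fin (k + 1) → ℝ) :
    ∑ a, ∑ b, c' a b * v a * u b
      = u 0 * (∑ a, c' a 0 * v a) + ∑ δ : Fin k, u δ.succ * (∑ a, c' a δ.succ * v a) := by
  calc ∑ a, ∑ b, c' a b * v a * u b
      = ∑ b, ∑ a, c' a b * v a * u b := Finset.sum_comm
    _ = ∑ b, u b * ∑ a, c' a b * v a := by
        refine Finset.sum_congr rfl fun b _ => ?_
        rw [Finset.mul_sum]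
        exact Finset.sum_congr rfl fun a _ => by ring
    _ = _ := by rw [Fin.sum_univ_succ]

lemma key2 (L : CoordLieAlgebroid m (n + 1)) (H : VStar m n → ℝ) (p : VStar m n)
    (δ : Fin n) :
    ∑ γ, p.2 γ * (L.c p.1 0 δ.succ γ.succ + ∑ β, L.c p.1 β.succ δ.succ γ.succ * Hy H p β)
      = -((∑ γ, ∑ β, L.c p.1 δ.succ β.succ γ.succ * p.2 γ * Hy H p β)
          + (∑ i, L.ρ p.1 δ.succ i * Hx H p i)
          - ∑ γ, L.c p.1 0 δ.succ γ.succ * p.2 γ)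
        + ∑ i, L.ρ p.1 δ.succ i * Hx H p i := by
  have e1 : ∑ γ, p.2 γ * ∑ β, L.c p.1 β.succ δ.succ γ.succ * Hy H p β
      = -(∑ γ, ∑ β, L.c p.1 δ.succ β.succ γ.succ * p.2 γ * Hy H p β) := by
    rw [← Finset.sum_neg_distrib]
    refine Finset.sum_congr rfl fun γ _ => ?_
    rw [← Finset.sum_neg_distrib, Finset.mul_sum]
    exact Finset.sum_congr rfl fun β _ => by rw [L.c_antisymm p.1 β.succ δ.succ γ.succ]; ring
  have e2 : ∑ γ, p.2 γ * L.c p.1 0 δ.succ γ.succ = ∑ γ, L.c p.1 0 δ.succ γ.succ * p.2 γ :=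
    Finset.sum_congr rfl fun γ _ => mul_comm _ _
  calc ∑ γ, p.2 γ * (L.c p.1 0 δ.succ γ.succ + ∑ β, L.c p.1 β.succ δ.succ γ.succ * Hy H p β)
      = (∑ γ, p.2 γ * L.c p.1 0 δ.succ γ.succ)
        + ∑ γ, p.2 γ * ∑ β, L.c p.1 β.succ δ.succ γ.succ * Hy H p β := by
        rw [← Finset.sum_add_distrib]
        exact Finset.sum_congr rfl fun γ _ => mul_add _ _ _
    _ = _ := by rw [e1, e2]; ring

end Helpers

/-- the Reeb section `R_h` of the cosymplectic structure `(Ω_h, η)` on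
`T^Ã V*`, characterized by `i_{R_h} Ω_h = 0` and `i_{R_h} η = 1`, exists, is unique,
and is locally given by
`R_h = ẽ_0 + (∂H/∂y_α) ẽ_α − (C_{αβ}^γ y_γ ∂H/∂y_β + ρ_α^i ∂H/∂x^i − C_{0α}^γ y_γ) ē_α`
in the adapted basis `{ẽ_0, ẽ_α, ē_α}`: a section `R` satisfies the characterizing
conditions iff it coincides with this local expression. -/
theorem reeb_section_formula {m n : ℕ} (L : CoordLieAlgebroid m (n + 1))
    (hc0 : ∀ x a b, L.c x a b 0 = 0)
    (H : VStar m n → ℝ) (hH : ContDiff ℝ (⊤ : ℕ∞) H) :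
    ∀ R : ASec m n,
      ((∀ p : VStar m n, etaSec R p = 1)
        ∧ (∀ p : VStar m n, ∀ w : AFib n, OmegahPt L H p (R p) w = 0))
      ↔ (∀ p : VStar m n, R p = ReebForm L H p) := by
  intro R
  have hdH : Differentiable ℝ H := hH.differentiable (by simp)
  constructor
  · rintro ⟨hη, hΩ⟩ p
    have h0 : (R p).1 0 = 1 := hη p
    have hs : ∀ α, (R p).1 α.succ = Hy H p α := by
      intro α
      have hE := hΩ p (0, Pi.single α 1)
      rw [omegah_pt L H hdH] at hE
      simp [Pi.single_apply, h0] at hE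
      linarith
    have hv : ∀ α, (R p).2 α = -((∑ γ, ∑ β, L.c p.1 α.succ β.succ γ.succ * p.2 γ * Hy H p β)
        + (∑ i, L.ρ p.1 α.succ i * Hx H p i)
        - ∑ γ, L.c p.1 0 α.succ γ.succ * p.2 γ) := by
      intro α
      have hE := hΩ p (Pi.single α.succ 1, 0)
      rw [omegah_pt L H hdH] at hE
      simp [Pi.single_apply, Fin.succ_ne_zero, Fin.succ_inj, h0, hc0,
        Fin.sum_univ_succ, hs] at hE
      linarith [key2 L H p α]
    refine Prod.ext ?_ ?_
    · funext a
      refine Fin.cases ?_ ?_ a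
      · rw [h0]; simp [ReebForm]
      · intro β; rw [hs β]; simp [ReebForm]
    · funext α
      rw [hv α]
      rfl
  · intro hR
    refine ⟨fun p => ?_, fun p w => ?_⟩
    · show (R p).1 0 = 1
      rw [hR p]; simp [ReebForm, etaSec]
    · rw [hR p, omegah_pt L H hdH]
      set r : AFib n := ReebForm L H p with hrdef
      have hr0 : r.1 0 = 1 := by simp [hrdef, ReebForm]
      have hr1 : ∀ β, r.1 β.succ = Hy H p β := by intro β; simp [hrdef, ReebForm]
      have hr2 : ∀ α, r.2 α = -((∑ γ, ∑ β, L.c p.1 α.succ β.succ γ.succ * p.2 γ * Hy H p β)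
          + (∑ i, L.ρ p.1 α.succ i * Hx H p i)
          - ∑ γ, L.c p.1 0 α.succ γ.succ * p.2 γ) := by intro α; simp [hrdef, ReebForm]
      clear_value r
      -- kill the C^0 bracket term
      have hz : (∑ a, ∑ b, L.c p.1 a b 0 * r.1 a * w.1 b) = 0 := by simp [hc0]
      rw [hz, mul_zero, zero_add]
      -- expand anchor sums
      rw [expand_anchor r.1 (L.ρ p.1) (Hx H p), expand_anchor w.1 (L.ρ p.1) (Hx H p)]
      simp only [hr0, hr1, one_mul, mul_one]
      -- expand the bracket term
      have hczz : ∀ γ : Fin n, L.c p.1 0 0 γ.succ = 0 := fun γ => by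
        have := L.c_antisymm p.1 0 0 γ.succ; linarith
      have E4 : ∀ (b : Fin (n + 1)) (γ : Fin n),
          ∑ a, L.c p.1 a b γ.succ * r.1 a
            = L.c p.1 0 b γ.succ + ∑ β, L.c p.1 β.succ b γ.succ * Hy H p β := by
        intro b γ
        rw [Fin.sum_univ_succ, hr0, mul_one]
        exact congrArg _ (Finset.sum_congr rfl fun β _ => by rw [hr1])
      have E3 : ∑ γ, p.2 γ * (∑ a, ∑ b, L.c p.1 a b γ.succ * r.1 a * w.1 b)
          = w.1 0 * (∑ γ, p.2 γ * ∑ β, L.c p.1 β.succ 0 γ.succ * Hy H p β)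
            + ∑ δ : Fin n, w.1 δ.succ * (∑ γ, p.2 γ * (L.c p.1 0 δ.succ γ.succ
                + ∑ β, L.c p.1 β.succ δ.succ γ.succ * Hy H p β)) := by
        calc ∑ γ, p.2 γ * (∑ a, ∑ b, L.c p.1 a b γ.succ * r.1 a * w.1 b)
            = ∑ γ, (w.1 0 * (p.2 γ * ∑ β, L.c p.1 β.succ 0 γ.succ * Hy H p β)
                + ∑ δ : Fin n, w.1 δ.succ * (p.2 γ * (L.c p.1 0 δ.succ γ.succ
                    + ∑ β, L.c p.1 β.succ δ.succ γ.succ * Hy H p β))) := by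
              refine Finset.sum_congr rfl fun γ _ => ?_
              have hb : ∑ a, ∑ b, L.c p.1 a b γ.succ * r.1 a * w.1 b
                  = w.1 0 * (L.c p.1 0 0 γ.succ + ∑ β, L.c p.1 β.succ 0 γ.succ * Hy H p β)
                    + ∑ δ : Fin n, w.1 δ.succ * (L.c p.1 0 δ.succ γ.succ
                        + ∑ β, L.c p.1 β.succ δ.succ γ.succ * Hy H p β) := by
                rw [expand_bracket (fun a b => L.c p.1 a b γ.succ) r.1 w.1]
                congr 1
                · exact congrArg (fun t => w.1 0 * t) (E4 0 γ)
                · exact Finset.sum_congr rfl fun δ _ =>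
                    congrArg (fun t => w.1 δ.succ * t) (E4 δ.succ γ)
              rw [hb, hczz γ, zero_add, mul_add]
              congr 1
              · ring
              · rw [Finset.mul_sum]
                exact Finset.sum_congr rfl fun δ _ => by ring
          _ = (∑ γ, w.1 0 * (p.2 γ * ∑ β, L.c p.1 β.succ 0 γ.succ * Hy H p β))
              + ∑ γ, ∑ δ : Fin n, w.1 δ.succ * (p.2 γ * (L.c p.1 0 δ.succ γ.succ
                  + ∑ β, L.c p.1 β.succ δ.succ γ.succ * Hy H p β)) := Finset.sum_add_distrib
          _ = _ := by
              rw [Finset.mul_sum, Finset.sum_comm]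
              congr 1
              exact Finset.sum_congr rfl fun δ _ => (Finset.mul_sum _ _ _).symm
      rw [E3]
      -- the δ-coefficients
      have hKd : ∀ δ : Fin n, ∑ γ, p.2 γ * (L.c p.1 0 δ.succ γ.succ
          + ∑ β, L.c p.1 β.succ δ.succ γ.succ * Hy H p β)
            = r.2 δ + ∑ i, L.ρ p.1 δ.succ i * Hx H p i := by
        intro δ
        rw [key2 L H p δ, hr2 δ]
      have hSG : ∑ δ : Fin n, w.1 δ.succ * (∑ γ, p.2 γ * (L.c p.1 0 δ.succ γ.succ
          + ∑ β, L.c p.1 β.succ δ.succ γ.succ * Hy H p β))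
            = (∑ δ : Fin n, w.1 δ.succ * r.2 δ)
              + ∑ δ : Fin n, w.1 δ.succ * (∑ i, L.ρ p.1 δ.succ i * Hx H p i) := by
        rw [← Finset.sum_add_distrib]
        exact Finset.sum_congr rfl fun δ _ => by rw [hKd δ]; ring
      rw [hSG]
      have hSC : ∑ β, r.2 β * w.1 β.succ = ∑ δ : Fin n, w.1 δ.succ * r.2 δ :=
        Finset.sum_congr rfl fun β _ => mul_comm _ _
      rw [hSC]
      -- the 0-coefficient
      have hK0 : (∑ β, r.2 β * Hy H p β)
          + (∑ β : Fin n, Hy H p β * (∑ i, L.ρ p.1 β.succ i * Hx H p i))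
          + (∑ γ, p.2 γ * ∑ β, L.c p.1 β.succ 0 γ.succ * Hy H p β) = 0 := by
        have h1 : ∀ β : Fin n, r.2 β * Hy H p β
            = Hy H p β * (∑ γ, p.2 γ * (L.c p.1 0 β.succ γ.succ
                + ∑ β', L.c p.1 β'.succ β.succ γ.succ * Hy H p β'))
              - Hy H p β * (∑ i, L.ρ p.1 β.succ i * Hx H p i) := by
          intro β
          have hk := key2 L H p β
          rw [hr2 β]
          linear_combination (-(Hy H p β)) * hk
        rw [sum_congr' h1, Finset.sum_sub_distrib]
        have hBsum : ∑ β : Fin n, Hy H p β * (∑ γ, p.2 γ * (L.c p.1 0 β.succ γ.succ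
            + ∑ β', L.c p.1 β'.succ β.succ γ.succ * Hy H p β'))
              = (∑ β : Fin n, ∑ γ, Hy H p β * (p.2 γ * L.c p.1 0 β.succ γ.succ))
                + ∑ β : Fin n, ∑ β' : Fin n,
                    (∑ γ, L.c p.1 β'.succ β.succ γ.succ * p.2 γ) * (Hy H p β * Hy H p β') := by
          rw [← Finset.sum_add_distrib]
          refine Finset.sum_congr rfl fun β _ => ?_
          calc Hy H p β * (∑ γ, p.2 γ * (L.c p.1 0 β.succ γ.succ
              + ∑ β', L.c p.1 β'.succ β.succ γ.succ * Hy H p β'))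
              = ∑ γ, (Hy H p β * (p.2 γ * L.c p.1 0 β.succ γ.succ)
                  + ∑ β', (L.c p.1 β'.succ β.succ γ.succ * p.2 γ) * (Hy H p β * Hy H p β')) := by
                rw [Finset.mul_sum]
                refine Finset.sum_congr rfl fun γ _ => ?_
                rw [mul_add, mul_add, Finset.mul_sum, Finset.mul_sum]
                congr 1
                exact Finset.sum_congr rfl fun β' _ => by ring
            _ = (∑ γ, Hy H p β * (p.2 γ * L.c p.1 0 β.succ γ.succ))
                + ∑ γ, ∑ β', (L.c p.1 β'.succ β.succ γ.succ * p.2 γ)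
                    * (Hy H p β * Hy H p β') := Finset.sum_add_distrib
            _ = _ := by
                congr 1
                rw [Finset.sum_comm]
                exact Finset.sum_congr rfl fun β' _ => (Finset.sum_mul _ _ _).symm
        have hzero : ∑ β : Fin n, ∑ β' : Fin n,
            (∑ γ, L.c p.1 β'.succ β.succ γ.succ * p.2 γ) * (Hy H p β * Hy H p β') = 0 := by
          refine double_antisym _ fun a b => ?_
          have hsw : (∑ γ, L.c p.1 b.succ a.succ γ.succ * p.2 γ)
              = -(∑ γ, L.c p.1 a.succ b.succ γ.succ * p.2 γ) := by
            rw [← Finset.sum_neg_distrib]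
            exact Finset.sum_congr rfl fun γ _ => by
              rw [L.c_antisymm p.1 b.succ a.succ γ.succ]; ring
          rw [hsw]; ring
        have hTc : ∑ γ, p.2 γ * ∑ β, L.c p.1 β.succ 0 γ.succ * Hy H p β
            = -(∑ β : Fin n, ∑ γ, Hy H p β * (p.2 γ * L.c p.1 0 β.succ γ.succ)) := by
          calc ∑ γ, p.2 γ * ∑ β, L.c p.1 β.succ 0 γ.succ * Hy H p β
              = ∑ γ, ∑ β, p.2 γ * (L.c p.1 β.succ 0 γ.succ * Hy H p β) := by
                exact Finset.sum_congr rfl fun γ _ => Finset.mul_sum _ _ _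
            _ = ∑ β : Fin n, ∑ γ, p.2 γ * (L.c p.1 β.succ 0 γ.succ * Hy H p β) :=
                Finset.sum_comm
            _ = ∑ β : Fin n, ∑ γ, -(Hy H p β * (p.2 γ * L.c p.1 0 β.succ γ.succ)) := by
                refine Finset.sum_congr rfl fun β _ => Finset.sum_congr rfl fun γ _ => ?_
                rw [L.c_antisymm p.1 β.succ 0 γ.succ]; ring
            _ = _ := by
                rw [← Finset.sum_neg_distrib]
                exact Finset.sum_congr rfl fun β _ => Finset.sum_neg_distrib _
        rw [hBsum, hTc]
        linear_combination hzero
      linear_combination (w.1 0) * hK0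
end
end

section
/- Let γ be a section of τ_V^* : V* → M and define Tγ : Ã → T^Ã V* by Tγ(ã) = (ã, T_x γ(ρ_Ã(ã))) for ã ∈ Ã_x. Then (Tγ, γ) is a morphism of Lie algebroids from Ã → M to T^Ã V* → V*, and moreover (Tγ, γ)^* λ_h = h ∘ γ and (Tγ, γ)^*(Ω_h) = −d^Ã(h ∘ γ), where h ∘ γ is viewed as a section of Ã* (via A^+ = Ã*). -/
noncomputable section

open Aff

namespace Aff

variable {m n : ℕ}

/-- The anchor `ρ_Ã` of `Ã`, as a tangent vector to `M`. -/
def avecA (L : CoordLieAlgebroid m (n + 1)) (x : Fin m → ℝ) (z : Fin (n + 1) → ℝ) :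
    Fin m → ℝ := fun i => ∑ a, z a * L.ρ x a i

/-- Pointwise bracket of constant sections of `Ã`. -/
def cbrA (L : CoordLieAlgebroid m (n + 1)) (x : Fin m → ℝ) (z z' : Fin (n + 1) → ℝ) :
    Fin (n + 1) → ℝ := fun g => ∑ a, ∑ b, L.c x a b g * z a * z' b

/-- The pointwise differential `d^Ã` of a 1-form on the Lie algebroid `Ã → M`. -/
def dptA (L : CoordLieAlgebroid m (n + 1)) (θ : (Fin m → ℝ) → (Fin (n + 1) → ℝ) → ℝ)
    (x : Fin m → ℝ) (z z' : Fin (n + 1) → ℝ) : ℝ :=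
  fderiv ℝ (fun x' => θ x' z') x (avecA L x z)
    - fderiv ℝ (fun x' => θ x' z) x (avecA L x z')
    - θ x (cbrA L x z z')

/-- Pointwise bracket of constant sections of `T^Ã V*`. -/
def cbr (L : CoordLieAlgebroid m (n + 1)) (p : VStar m n) (w w' : AFib n) : AFib n :=
  (fun g => ∑ a, ∑ b, L.c p.1 a b g * w.1 a * w'.1 b, 0)

/-- The pointwise differential of a 1-form on the Lie algebroid `T^Ã V* → V*`. -/
def dptV (L : CoordLieAlgebroid m (n + 1)) (θ : VStar m n → AFib n → ℝ)
    (p : VStar m n) (w w' : AFib n) : ℝ :=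
  fderiv ℝ (fun q => θ q w') p (avec L p w) - fderiv ℝ (fun q => θ q w) p (avec L p w')
    - θ p (cbr L p w w')

/-- The map `Tγ : Ã → T^Ã V*`, `Tγ(ã) = (ã, (T_x γ)(ρ_Ã(ã)))`, in coordinates,
for a section `γ` of `τ_V^* : V* → M`. -/
def Tgam (L : CoordLieAlgebroid m (n + 1)) (γ : (Fin m → ℝ) → Fin n → ℝ)
    (x : Fin m → ℝ) (z : Fin (n + 1) → ℝ) : AFib n :=
  (z, fun β => fderiv ℝ (fun x' => γ x' β) x (avecA L x z))

/-- The pointwise value of `λ_h`. -/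
def lamhPt (H : VStar m n → ℝ) (p : VStar m n) (w : AFib n) : ℝ :=
  -H p * w.1 0 + ∑ β, p.2 β * w.1 β.succ

/-- The section `h ∘ γ` of `A⁺ = Ã*`, as a 1-form on `Ã`, paired with `z`. -/
def hgam (H : VStar m n → ℝ) (γ : (Fin m → ℝ) → Fin n → ℝ) (x : Fin m → ℝ)
    (z : Fin (n + 1) → ℝ) : ℝ :=
  -H (x, γ x) * z 0 + ∑ β, γ x β * z β.succ

end Aff

namespace Aff

variable {m n : ℕ}

lemma fderiv_apply_eq_sum {m : ℕ} (f : (Fin m → ℝ) → ℝ) (x u : Fin m → ℝ) :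
    fderiv ℝ f x u = ∑ i, u i * pd i f x := by
  have hu : u = ∑ i, u i • (Pi.single i 1 : Fin m → ℝ) := by
    funext j
    simp [Finset.sum_apply, Pi.single_apply]
  conv_lhs => rw [hu]
  rw [map_sum]
  simp [pd, smul_eq_mul]

lemma pd_comm {m : ℕ} (f : (Fin m → ℝ) → ℝ) (hf : ContDiff ℝ (⊤ : ℕ∞) f) (x : Fin m → ℝ)
    (i j : Fin m) : pd j (pd i f) x = pd i (pd j f) x := by
  have hd : DifferentiableAt ℝ (fderiv ℝ f) x :=
    ((hf.fderiv_right (m := 1) (by exact WithTop.coe_le_coe.2 le_top)).differentiable one_ne_zero) x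
  have key : ∀ c : Fin m → ℝ,
      fderiv ℝ (fun y => fderiv ℝ f y c) x = (fderiv ℝ (fderiv ℝ f) x).flip c := by
    intro c
    have := fderiv_clm_apply (c := fderiv ℝ f) (u := fun _ => c) hd (differentiableAt_const c)
    simpa using this
  have hsymm := ((hf.contDiffAt (x := x)).isSymmSndFDerivAt (n := (⊤ : ℕ∞)) (by rw [minSmoothness_of_isRCLikeNormedField]; exact WithTop.coe_le_coe.2 (le_top : (2 : ℕ∞) ≤ ⊤))).eq
    (Pi.single j 1) (Pi.single i 1)
  have e1 : pd i f = fun y => fderiv ℝ f y (Pi.single i 1) := rfl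
  have e2 : pd j f = fun y => fderiv ℝ f y (Pi.single j 1) := rfl
  show fderiv ℝ (pd i f) x (Pi.single j 1) = fderiv ℝ (pd j f) x (Pi.single i 1)
  rw [e1, e2, key, key]
  simpa using hsymm

lemma pd_smooth {m : ℕ} (f : (Fin m → ℝ) → ℝ) (hf : ContDiff ℝ (⊤ : ℕ∞) f) (i : Fin m) :
    ContDiff ℝ (⊤ : ℕ∞) (pd i f) :=
  (hf.fderiv_right (by simp)).clm_apply contDiff_const

lemma avecA_smooth (L : CoordLieAlgebroid m (n + 1)) (z : Fin (n + 1) → ℝ) :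
    ContDiff ℝ (⊤ : ℕ∞) (fun x => avecA L x z) := by
  apply contDiff_pi.2
  intro i
  exact ContDiff.sum fun a _ => contDiff_const.mul (L.smooth_ρ a i)

/-- componentwise fderiv -/
lemma fderiv_comp_pi {m n : ℕ} (γ : (Fin m → ℝ) → Fin n → ℝ) (hγ : ContDiff ℝ (⊤ : ℕ∞) γ)
    (x u : Fin m → ℝ) (β : Fin n) :
    fderiv ℝ (fun x' => γ x' β) x u = fderiv ℝ γ x u β := by
  have h := (ContinuousLinearMap.proj β (R := ℝ) (φ := fun _ : Fin n => ℝ)).hasFDerivAt.comp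
    x (hγ.differentiable (by simp) x).hasFDerivAt
  have h2 : fderiv ℝ (fun x' => γ x' β) x
      = (ContinuousLinearMap.proj β).comp (fderiv ℝ γ x) := h.fderiv
  rw [h2]
  rfl

/-- Part 1: the morphism property on functions. -/
lemma part1 (L : CoordLieAlgebroid m (n + 1)) (γ : (Fin m → ℝ) → Fin n → ℝ)
    (hγ : ContDiff ℝ (⊤ : ℕ∞) γ) (F : VStar m n → ℝ) (x : Fin m → ℝ) (z : Fin (n + 1) → ℝ)
    (hF : DifferentiableAt ℝ F (x, γ x)) :
    fderiv ℝ (fun x' => F (x', γ x')) x (avecA L x z)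
      = fderiv ℝ F (x, γ x) (avec L (x, γ x) (Tgam L γ x z)) := by
  have hγd : HasFDerivAt γ (fderiv ℝ γ x) x := (hγ.differentiable (by simp) x).hasFDerivAt
  have hP : HasFDerivAt (fun x' => ((x' : Fin m → ℝ), γ x'))
      ((ContinuousLinearMap.id ℝ (Fin m → ℝ)).prod (fderiv ℝ γ x)) x :=
    (hasFDerivAt_id x).prodMk hγd
  have hcomp : fderiv ℝ (fun x' => F (x', γ x')) x
      = (fderiv ℝ F (x, γ x)).comp
        ((ContinuousLinearMap.id ℝ (Fin m → ℝ)).prod (fderiv ℝ γ x)) :=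
    (hF.hasFDerivAt.comp x hP).fderiv
  rw [hcomp]
  have havec : avec L (x, γ x) (Tgam L γ x z) = (avecA L x z, fderiv ℝ γ x (avecA L x z)) := by
    refine Prod.ext rfl ?_
    funext β
    exact fderiv_comp_pi γ hγ x (avecA L x z) β
  rw [havec]
  rfl

end Aff
namespace Aff

variable {m n : ℕ}

/-- The key identity: the anchor-compatibility structure equation implies that the
antisymmetrized second Lie derivative of a function equals the Lie derivative along
the bracket. -/
lemma key_lemma (L : CoordLieAlgebroid m (n + 1)) (f : (Fin m → ℝ) → ℝ)
    (hf : ContDiff ℝ (⊤ : ℕ∞) f) (x : Fin m → ℝ) (z z' : Fin (n + 1) → ℝ) :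
    fderiv ℝ (fun x' => fderiv ℝ f x' (avecA L x' z')) x (avecA L x z)
      - fderiv ℝ (fun x' => fderiv ℝ f x' (avecA L x' z)) x (avecA L x z')
      = fderiv ℝ f x (avecA L x (cbrA L x z z')) := by
  have hterm : ∀ (a : Fin (n + 1)) (i : Fin m),
      ContDiff ℝ (⊤ : ℕ∞) (fun x' => L.ρ x' a i * pd i f x') :=
    fun a i => (L.smooth_ρ a i).mul (pd_smooth f hf i)
  -- rewrite the inner function as an explicit double sum
  have hfun : ∀ z₀ : Fin (n + 1) → ℝ,
      (fun x' => fderiv ℝ f x' (avecA L x' z₀))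
        = fun x' => ∑ i, ∑ a, z₀ a * (L.ρ x' a i * pd i f x') := by
    intro z₀
    funext x'
    rw [fderiv_apply_eq_sum]
    refine Finset.sum_congr rfl fun i _ => ?_
    show avecA L x' z₀ i * pd i f x' = _
    rw [avecA, Finset.sum_mul]
    exact Finset.sum_congr rfl fun a _ => mul_assoc _ _ _
  -- derivative of the double sum
  have hD : ∀ (z₀ u : _),
      fderiv ℝ (fun x' => ∑ i, ∑ a, (z₀ : Fin (n+1) → ℝ) a * (L.ρ x' a i * pd i f x')) x u
        = ∑ i, ∑ a, z₀ a *
            (fderiv ℝ (fun x' => L.ρ x' a i) x u * pd i f x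
              + L.ρ x a i * fderiv ℝ (pd i f) x u) := by
    intro z₀ u
    have hdsum : fderiv ℝ
        (fun x' => ∑ i, ∑ a, z₀ a * (L.ρ x' a i * pd i f x')) x
        = ∑ i, ∑ a, z₀ a • fderiv ℝ (fun x' => L.ρ x' a i * pd i f x') x := by
      rw [fderiv_fun_sum (fun i _ => DifferentiableAt.fun_sum (fun a _ =>
        (differentiableAt_const _).fun_mul ((hterm a i).differentiable (by simp) x)))]
      refine Finset.sum_congr rfl fun i _ => ?_
      rw [fderiv_fun_sum (fun a _ =>
        (differentiableAt_const _).fun_mul ((hterm a i).differentiable (by simp) x))]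
      refine Finset.sum_congr rfl fun a _ => ?_
      exact fderiv_const_mul ((hterm a i).differentiable (by simp) x) _
    rw [hdsum]
    rw [ContinuousLinearMap.sum_apply]
    refine Finset.sum_congr rfl fun i _ => ?_
    rw [ContinuousLinearMap.sum_apply]
    refine Finset.sum_congr rfl fun a _ => ?_
    rw [ContinuousLinearMap.smul_apply, smul_eq_mul]
    congr 1
    rw [fderiv_fun_mul ((L.smooth_ρ a i).differentiable (by simp) x)
      ((pd_smooth f hf i).differentiable (by simp) x)]
    simp only [ContinuousLinearMap.add_apply, ContinuousLinearMap.smul_apply, smul_eq_mul]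
    ring
  rw [hfun z', hfun z, hD z' (avecA L x z), hD z (avecA L x z')]
  set u := avecA L x z with hu
  set u' := avecA L x z' with hu'
  -- split into ρ-derivative and Hessian parts
  have hsplit : ∀ (w : Fin (n+1) → ℝ) (v : Fin m → ℝ),
      (∑ i, ∑ a, w a * (fderiv ℝ (fun x' => L.ρ x' a i) x v * pd i f x
          + L.ρ x a i * fderiv ℝ (pd i f) x v))
        = (∑ i, ∑ a, w a * (fderiv ℝ (fun x' => L.ρ x' a i) x v * pd i f x))
          + ∑ i, avecA L x w i * fderiv ℝ (pd i f) x v := by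
    intro w v
    rw [← Finset.sum_add_distrib]
    refine Finset.sum_congr rfl fun i _ => ?_
    rw [avecA, Finset.sum_mul, ← Finset.sum_add_distrib]
    exact Finset.sum_congr rfl fun a _ => by ring
  rw [hsplit z' u, hsplit z u']
  -- Hessian part cancels by symmetry of second derivatives
  have hHess : (∑ i, avecA L x z' i * fderiv ℝ (pd i f) x u)
      = ∑ i, avecA L x z i * fderiv ℝ (pd i f) x u' := by
    have e1 : ∀ (i : Fin m) (v : Fin m → ℝ),
        fderiv ℝ (pd i f) x v = ∑ j, v j * pd j (pd i f) x := fun i v =>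
      fderiv_apply_eq_sum (pd i f) x v
    calc (∑ i, avecA L x z' i * fderiv ℝ (pd i f) x u)
        = ∑ i, ∑ j, avecA L x z' i * (avecA L x z j * pd j (pd i f) x) := by
          refine Finset.sum_congr rfl fun i _ => ?_
          rw [e1 i u, hu, Finset.mul_sum]
      _ = ∑ j, ∑ i, avecA L x z' i * (avecA L x z j * pd j (pd i f) x) := Finset.sum_comm
      _ = ∑ i, ∑ j, avecA L x z' j * (avecA L x z i * pd i (pd j f) x) := rfl
      _ = ∑ i, ∑ j, avecA L x z i * (avecA L x z' j * pd j (pd i f) x) := by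
          refine Finset.sum_congr rfl fun i _ => Finset.sum_congr rfl fun j _ => ?_
          rw [pd_comm f hf x j i]
          ring
      _ = ∑ i, avecA L x z i * fderiv ℝ (pd i f) x u' := by
          refine Finset.sum_congr rfl fun i _ => ?_
          rw [e1 i u', hu', Finset.mul_sum]
  -- anchor-derivative part gives the bracket term via the structure equation
  have hanch : ∀ (i : Fin m) (a b : Fin (n + 1)),
      (∑ j, L.ρ x b j * pd j (fun x' => L.ρ x' a i) x)
        - (∑ j, L.ρ x a j * pd j (fun x' => L.ρ x' b i) x)
        = ∑ g, L.c x b a g * L.ρ x g i := by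
    intro i a b
    rw [← L.anchor_compat x b a i, Finset.sum_sub_distrib]
  have hrho : (∑ i, ∑ a, z' a * (fderiv ℝ (fun x' => L.ρ x' a i) x u * pd i f x))
      - (∑ i, ∑ a, z a * (fderiv ℝ (fun x' => L.ρ x' a i) x u' * pd i f x))
      = fderiv ℝ f x (avecA L x (cbrA L x z z')) := by
    have hdir : ∀ (i : Fin m) (a : Fin (n + 1)) (w : Fin (n + 1) → ℝ),
        fderiv ℝ (fun x' => L.ρ x' a i) x (avecA L x w)
          = ∑ b, w b * (∑ j, L.ρ x b j * pd j (fun x' => L.ρ x' a i) x) := by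
      intro i a w
      rw [fderiv_apply_eq_sum]
      calc (∑ j, avecA L x w j * pd j (fun x' => L.ρ x' a i) x)
          = ∑ j, ∑ b, w b * (L.ρ x b j * pd j (fun x' => L.ρ x' a i) x) := by
            refine Finset.sum_congr rfl fun j _ => ?_
            rw [avecA, Finset.sum_mul]
            exact Finset.sum_congr rfl fun b _ => mul_assoc _ _ _
        _ = ∑ b, ∑ j, w b * (L.ρ x b j * pd j (fun x' => L.ρ x' a i) x) := Finset.sum_comm
        _ = ∑ b, w b * (∑ j, L.ρ x b j * pd j (fun x' => L.ρ x' a i) x) := by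
            exact Finset.sum_congr rfl fun b _ => (Finset.mul_sum _ _ _).symm
    rw [fderiv_apply_eq_sum f x, ← Finset.sum_sub_distrib]
    refine Finset.sum_congr rfl fun i _ => ?_
    rw [hu, hu']
    simp only [hdir i]
    -- factor out `pd i f x`
    have hstep : (∑ a, z' a * (∑ b, z b * (∑ j, L.ρ x b j * pd j (fun x' => L.ρ x' a i) x))
          * pd i f x)
        - (∑ a, z a * (∑ b, z' b * (∑ j, L.ρ x b j * pd j (fun x' => L.ρ x' a i) x))
          * pd i f x)
        = (∑ a, ∑ b, z' a * z b * (∑ g, L.c x b a g * L.ρ x g i)) * pd i f x := by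
      rw [← Finset.sum_mul, ← Finset.sum_mul, ← sub_mul]
      congr 1
      calc (∑ a, z' a * ∑ b, z b * (∑ j, L.ρ x b j * pd j (fun x' => L.ρ x' a i) x))
            - ∑ a, z a * ∑ b, z' b * (∑ j, L.ρ x b j * pd j (fun x' => L.ρ x' a i) x)
          = (∑ a, ∑ b, z' a * (z b * (∑ j, L.ρ x b j * pd j (fun x' => L.ρ x' a i) x)))
            - ∑ a, ∑ b, z a * (z' b * (∑ j, L.ρ x b j * pd j (fun x' => L.ρ x' a i) x)) := by
            rw [← Finset.sum_sub_distrib, ← Finset.sum_sub_distrib]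
            refine Finset.sum_congr rfl fun a _ => ?_
            rw [Finset.mul_sum, Finset.mul_sum]
        _ = (∑ a, ∑ b, z' a * (z b * (∑ j, L.ρ x b j * pd j (fun x' => L.ρ x' a i) x)))
            - ∑ a, ∑ b, z b * (z' a * (∑ j, L.ρ x a j * pd j (fun x' => L.ρ x' b i) x)) := by
            congr 1
            exact Finset.sum_comm
        _ = ∑ a, ∑ b, z' a * z b * ((∑ j, L.ρ x b j * pd j (fun x' => L.ρ x' a i) x)
              - (∑ j, L.ρ x a j * pd j (fun x' => L.ρ x' b i) x)) := by
            rw [← Finset.sum_sub_distrib]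
            refine Finset.sum_congr rfl fun a _ => ?_
            rw [← Finset.sum_sub_distrib]
            exact Finset.sum_congr rfl fun b _ => by ring
        _ = ∑ a, ∑ b, z' a * z b * (∑ g, L.c x b a g * L.ρ x g i) := by
            refine Finset.sum_congr rfl fun a _ => Finset.sum_congr rfl fun b _ => ?_
            rw [hanch i a b]
    have hbr : avecA L x (cbrA L x z z') i
        = ∑ a, ∑ b, z' a * z b * (∑ g, L.c x b a g * L.ρ x g i) := by
      show (∑ g, cbrA L x z z' g * L.ρ x g i) = _
      calc (∑ g, cbrA L x z z' g * L.ρ x g i)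
          = ∑ g, ∑ a, ∑ b, L.c x a b g * z a * z' b * L.ρ x g i := by
            refine Finset.sum_congr rfl fun g _ => ?_
            rw [cbrA, Finset.sum_mul]
            exact Finset.sum_congr rfl fun a _ => Finset.sum_mul _ _ _
        _ = ∑ a, ∑ g, ∑ b, L.c x a b g * z a * z' b * L.ρ x g i := Finset.sum_comm
        _ = ∑ a, ∑ b, ∑ g, L.c x a b g * z a * z' b * L.ρ x g i :=
            Finset.sum_congr rfl fun a _ => Finset.sum_comm
        _ = ∑ b, ∑ a, ∑ g, L.c x a b g * z a * z' b * L.ρ x g i := Finset.sum_comm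
        _ = ∑ a, ∑ b, z' a * z b * (∑ g, L.c x b a g * L.ρ x g i) := by
            refine Finset.sum_congr rfl fun a _ => Finset.sum_congr rfl fun b _ => ?_
            rw [Finset.mul_sum]
            exact Finset.sum_congr rfl fun g _ => by ring
    have e1 : (∑ a, z' a * ((∑ b, z b * ∑ j, L.ρ x b j * pd j (fun x' => L.ρ x' a i) x)
          * pd i f x))
        = ∑ a, z' a * (∑ b, z b * ∑ j, L.ρ x b j * pd j (fun x' => L.ρ x' a i) x)
          * pd i f x :=
      Finset.sum_congr rfl fun a _ => (mul_assoc _ _ _).symm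
    have e2 : (∑ a, z a * ((∑ b, z' b * ∑ j, L.ρ x b j * pd j (fun x' => L.ρ x' a i) x)
          * pd i f x))
        = ∑ a, z a * (∑ b, z' b * ∑ j, L.ρ x b j * pd j (fun x' => L.ρ x' a i) x)
          * pd i f x :=
      Finset.sum_congr rfl fun a _ => (mul_assoc _ _ _).symm
    rw [e1, e2, hstep, hbr]
  linear_combination hHess + hrho
end Aff
namespace Aff

variable {m n : ℕ}

lemma theta_decomp (θ : VStar m n → AFib n → ℝ) (hlin : ∀ p, IsLinearMap ℝ (θ p))
    (q : VStar m n) (v : AFib n) :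
    θ q v = (∑ a, v.1 a * θ q (Pi.single a 1, 0)) + ∑ β, v.2 β * θ q (0, Pi.single β 1) := by
  have hv : v = (∑ a, v.1 a • ((Pi.single a 1 : Fin (n + 1) → ℝ), (0 : Fin n → ℝ)))
      + ∑ β, v.2 β • ((0 : Fin (n + 1) → ℝ), (Pi.single β 1 : Fin n → ℝ)) := by
    refine Prod.ext ?_ ?_
    · funext j
      simp [Prod.fst_sum, Finset.sum_apply, Pi.single_apply]
    · funext j
      simp [Prod.snd_sum, Finset.sum_apply, Pi.single_apply]
  have hco : θ q = (IsLinearMap.mk' (θ q) (hlin q) : AFib n →ₗ[ℝ] ℝ) := rfl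
  rw [hco]
  conv_lhs => rw [hv]
  rw [map_add, map_sum, map_sum]
  simp only [map_smul, smul_eq_mul]

lemma pullback_fderiv (L : CoordLieAlgebroid m (n + 1)) (γ : (Fin m → ℝ) → Fin n → ℝ)
    (hγ : ContDiff ℝ (⊤ : ℕ∞) γ) (θ : VStar m n → AFib n → ℝ)
    (hlin : ∀ p, IsLinearMap ℝ (θ p)) (hsm : ∀ w, ContDiff ℝ (⊤ : ℕ∞) (fun p => θ p w))
    (x : Fin m → ℝ) (c z : Fin (n + 1) → ℝ) :
    fderiv ℝ (fun x' => θ (x', γ x') (Tgam L γ x' c)) x (avecA L x z)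
      = fderiv ℝ (fun q => θ q (Tgam L γ x c)) (x, γ x) (avec L (x, γ x) (Tgam L γ x z))
        + ∑ β, fderiv ℝ (fun x' => fderiv ℝ (fun y => γ y β) x' (avecA L x' c)) x
            (avecA L x z)
          * θ (x, γ x) ((0 : Fin (n + 1) → ℝ), Pi.single β 1) := by
  have hP : ContDiff ℝ (⊤ : ℕ∞) (fun x' : Fin m → ℝ => ((x' : Fin m → ℝ), γ x')) :=
    contDiff_id.prodMk hγ
  have hcomp : ∀ w₀, ContDiff ℝ (⊤ : ℕ∞) fun x' => θ (x', γ x') w₀ := fun w₀ => (hsm w₀).comp hP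
  have hV : ∀ β, ContDiff ℝ (⊤ : ℕ∞) (fun x' => fderiv ℝ (fun y => γ y β) x' (avecA L x' c)) :=
    fun β => (((contDiff_pi.mp hγ β).fderiv_right (by simp)).clm_apply (avecA_smooth L c))
  have hexp : (fun x' => θ (x', γ x') (Tgam L γ x' c))
      = fun x' => (∑ a, c a * θ (x', γ x') (Pi.single a 1, 0))
          + ∑ β, fderiv ℝ (fun y => γ y β) x' (avecA L x' c)
              * θ (x', γ x') (0, Pi.single β 1) := by
    funext x'
    rw [theta_decomp θ hlin]
    rfl
  have dA : ∀ a, DifferentiableAt ℝ (fun x' => c a * θ (x', γ x') (Pi.single a 1, 0)) x :=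
    fun a => (differentiableAt_const _).mul ((hcomp _).differentiable (by simp) x)
  have dB : ∀ β, DifferentiableAt ℝ (fun x' =>
      fderiv ℝ (fun y => γ y β) x' (avecA L x' c) * θ (x', γ x') (0, Pi.single β 1)) x :=
    fun β => ((hV β).differentiable (by simp) x).mul ((hcomp _).differentiable (by simp) x)
  have hLHS : fderiv ℝ (fun x' => θ (x', γ x') (Tgam L γ x' c)) x (avecA L x z)
      = (∑ a, c a * fderiv ℝ (fun x' => θ (x', γ x') (Pi.single a 1, 0)) x (avecA L x z))
        + ∑ β, (fderiv ℝ (fun x' => fderiv ℝ (fun y => γ y β) x' (avecA L x' c)) x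
              (avecA L x z) * θ ((x : Fin m → ℝ), γ x) (0, Pi.single β 1)
            + fderiv ℝ (fun y => γ y β) x (avecA L x c)
              * fderiv ℝ (fun x' => θ (x', γ x') (0, Pi.single β 1)) x (avecA L x z)) := by
    rw [hexp]
    rw [fderiv_fun_add (DifferentiableAt.fun_sum fun a _ => dA a) (DifferentiableAt.fun_sum fun β _ => dB β)]
    rw [ContinuousLinearMap.add_apply]
    congr 1
    · rw [fderiv_fun_sum fun a _ => dA a, ContinuousLinearMap.sum_apply]
      refine Finset.sum_congr rfl fun a _ => ?_
      rw [fderiv_const_mul ((hcomp _).differentiable (by simp) x)]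
      simp
    · rw [fderiv_fun_sum fun β _ => dB β, ContinuousLinearMap.sum_apply]
      refine Finset.sum_congr rfl fun β _ => ?_
      rw [fderiv_fun_mul ((hV β).differentiable (by simp) x) ((hcomp _).differentiable (by simp) x)]
      simp only [ContinuousLinearMap.add_apply, ContinuousLinearMap.smul_apply, smul_eq_mul]
      ring
  have hRHS1 : fderiv ℝ (fun q => θ q (Tgam L γ x c)) (x, γ x)
        (avec L (x, γ x) (Tgam L γ x z))
      = (∑ a, c a * fderiv ℝ (fun x' => θ (x', γ x') (Pi.single a 1, 0)) x (avecA L x z))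
        + ∑ β, fderiv ℝ (fun y => γ y β) x (avecA L x c)
            * fderiv ℝ (fun x' => θ (x', γ x') (0, Pi.single β 1)) x (avecA L x z) := by
    have hexp2 : (fun q => θ q (Tgam L γ x c))
        = fun q => (∑ a, c a * θ q (Pi.single a 1, 0))
            + ∑ β, fderiv ℝ (fun y => γ y β) x (avecA L x c) * θ q (0, Pi.single β 1) := by
      funext q
      rw [theta_decomp θ hlin]
      rfl
    rw [hexp2]
    have dA2 : ∀ a : Fin (n + 1), DifferentiableAt ℝ
        (fun q => c a * θ q (Pi.single a 1, 0)) ((x : Fin m → ℝ), γ x) :=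
      fun a => (differentiableAt_const _).mul ((hsm _).differentiable (by simp) _)
    have dB2 : ∀ β : Fin n, DifferentiableAt ℝ
        (fun q => fderiv ℝ (fun y => γ y β) x (avecA L x c) * θ q (0, Pi.single β 1))
          ((x : Fin m → ℝ), γ x) :=
      fun β => (differentiableAt_const _).mul ((hsm _).differentiable (by simp) _)
    rw [fderiv_fun_add (DifferentiableAt.fun_sum fun a _ => dA2 a)
      (DifferentiableAt.fun_sum fun β _ => dB2 β), ContinuousLinearMap.add_apply]
    congr 1
    · rw [fderiv_fun_sum fun a _ => dA2 a, ContinuousLinearMap.sum_apply]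
      refine Finset.sum_congr rfl fun a _ => ?_
      rw [fderiv_const_mul ((hsm _).differentiable (by simp) _)]
      rw [ContinuousLinearMap.smul_apply, smul_eq_mul]
      congr 1
      exact (part1 L γ hγ (fun q => θ q (Pi.single a 1, 0)) x z
        ((hsm _).differentiable (by simp) _)).symm
    · rw [fderiv_fun_sum fun β _ => dB2 β, ContinuousLinearMap.sum_apply]
      refine Finset.sum_congr rfl fun β _ => ?_
      rw [fderiv_const_mul ((hsm _).differentiable (by simp) _)]
      rw [ContinuousLinearMap.smul_apply, smul_eq_mul]
      congr 1
      exact (part1 L γ hγ (fun q => θ q (0, Pi.single β 1)) x z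
        ((hsm _).differentiable (by simp) _)).symm
  rw [hLHS, hRHS1, Finset.sum_add_distrib]
  ring

end Aff
namespace Aff

variable {m n : ℕ}

lemma part2 (L : CoordLieAlgebroid m (n + 1)) (γ : (Fin m → ℝ) → Fin n → ℝ)
    (hγ : ContDiff ℝ (⊤ : ℕ∞) γ) (θ : VStar m n → AFib n → ℝ)
    (hlin : ∀ p, IsLinearMap ℝ (θ p)) (hsm : ∀ w, ContDiff ℝ (⊤ : ℕ∞) (fun p => θ p w))
    (x : Fin m → ℝ) (z z' : Fin (n + 1) → ℝ) :
    dptA L (fun x' z₀ => θ (x', γ x') (Tgam L γ x' z₀)) x z z'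
      = dptV L θ (x, γ x) (Tgam L γ x z) (Tgam L γ x z') := by
  rw [dptA, dptV]
  rw [pullback_fderiv L γ hγ θ hlin hsm x z' z, pullback_fderiv L γ hγ θ hlin hsm x z z']
  -- the bracket terms
  have hbr1 : θ ((x : Fin m → ℝ), γ x) (Tgam L γ x (cbrA L x z z'))
      = (∑ a, cbrA L x z z' a * θ (x, γ x) (Pi.single a 1, 0))
        + ∑ β, fderiv ℝ (fun y => γ y β) x (avecA L x (cbrA L x z z'))
            * θ (x, γ x) (0, Pi.single β 1) := by
    rw [theta_decomp θ hlin]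
    rfl
  have hbr2 : θ ((x : Fin m → ℝ), γ x) (cbr L (x, γ x) (Tgam L γ x z) (Tgam L γ x z'))
      = ∑ a, cbrA L x z z' a * θ (x, γ x) (Pi.single a 1, 0) := by
    rw [theta_decomp θ hlin]
    have h1 : (cbr L ((x : Fin m → ℝ), γ x) (Tgam L γ x z) (Tgam L γ x z')).1
        = cbrA L x z z' := rfl
    have h2 : (cbr L ((x : Fin m → ℝ), γ x) (Tgam L γ x z) (Tgam L γ x z')).2
        = (0 : Fin n → ℝ) := rfl
    rw [h1, h2]
    simp
  have hkey : ∀ β : Fin n,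
      fderiv ℝ (fun x' => fderiv ℝ (fun y => γ y β) x' (avecA L x' z')) x (avecA L x z)
        - fderiv ℝ (fun x' => fderiv ℝ (fun y => γ y β) x' (avecA L x' z)) x (avecA L x z')
        = fderiv ℝ (fun y => γ y β) x (avecA L x (cbrA L x z z')) :=
    fun β => key_lemma L _ (contDiff_pi.mp hγ β) x z z'
  have hsum : (∑ β, fderiv ℝ (fun x' => fderiv ℝ (fun y => γ y β) x' (avecA L x' z')) x
          (avecA L x z) * θ (x, γ x) ((0 : Fin (n + 1) → ℝ), Pi.single β 1))
        - ∑ β, fderiv ℝ (fun x' => fderiv ℝ (fun y => γ y β) x' (avecA L x' z)) x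
          (avecA L x z') * θ (x, γ x) ((0 : Fin (n + 1) → ℝ), Pi.single β 1)
      = ∑ β, fderiv ℝ (fun y => γ y β) x (avecA L x (cbrA L x z z'))
          * θ (x, γ x) ((0 : Fin (n + 1) → ℝ), Pi.single β 1) := by
    rw [← Finset.sum_sub_distrib]
    refine Finset.sum_congr rfl fun β _ => ?_
    rw [← sub_mul, hkey β]
  show _ - _ - θ ((x : Fin m → ℝ), γ x) (Tgam L γ x (cbrA L x z z')) = _
  rw [hbr1, hbr2]
  linear_combination hsum

end Aff
namespace Aff

variable {m n : ℕ}

lemma omegahPt_eq_dptV (L : CoordLieAlgebroid m (n + 1)) (H : VStar m n → ℝ)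
    (p : VStar m n) (w w' : AFib n) :
    OmegahPt L H p w w' = -dptV L (lamhPt H) p w w' := by
  have hbr : aBracket L (fun _ => w) (fun _ => w') p = cbr L p w w' := by
    refine Prod.ext ?_ ?_
    · funext g
      show aD L (fun _ => w) (fun _ => w'.1 g) p - aD L (fun _ => w') (fun _ => w.1 g) p
            + ∑ a, ∑ b, L.c p.1 a b g * w.1 a * w'.1 b = _
      rw [aD, aD, fderiv_fun_const]
      simp [cbr]
    · funext g
      show aD L (fun _ => w) (fun _ => w'.2 g) p - aD L (fun _ => w') (fun _ => w.2 g) p = _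
      rw [aD, aD, fderiv_fun_const]
      simp [cbr]
  have e1 : lambdah H (fun _ => w') = fun q => lamhPt H q w' := rfl
  have e2 : lambdah H (fun _ => w) = fun q => lamhPt H q w := rfl
  show -(aD L (fun _ => w) (lambdah H (fun _ => w')) p
      - aD L (fun _ => w') (lambdah H (fun _ => w)) p
      - lambdah H (aBracket L (fun _ => w) (fun _ => w')) p) = _
  have e3 : lambdah H (aBracket L (fun _ => w) (fun _ => w')) p
      = lamhPt H p (aBracket L (fun _ => w) (fun _ => w') p) := rfl
  rw [e1, e2, e3, hbr]
  rw [aD, aD, dptV]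

lemma lamhPt_linear (H : VStar m n → ℝ) (p : VStar m n) : IsLinearMap ℝ (lamhPt H p) := by
  constructor
  · intro v v'
    simp only [lamhPt, Prod.fst_add, Pi.add_apply, mul_add, Finset.sum_add_distrib]
    ring
  · intro cc v
    simp only [lamhPt, Prod.smul_fst, Pi.smul_apply, smul_eq_mul]
    rw [mul_add, Finset.mul_sum]
    congr 1
    · ring
    · exact Finset.sum_congr rfl fun β _ => by ring

lemma lamhPt_smooth (H : VStar m n → ℝ) (hH : ContDiff ℝ (⊤ : ℕ∞) H) (w : AFib n) :
    ContDiff ℝ (⊤ : ℕ∞) (fun p => lamhPt H p w) := by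
  refine ContDiff.add ?_ ?_
  · exact hH.neg.mul contDiff_const
  · exact ContDiff.sum fun β _ => (contDiff_pi.mp contDiff_snd β).mul contDiff_const

lemma part3 (L : CoordLieAlgebroid m (n + 1)) (H : VStar m n → ℝ)
    (γ : (Fin m → ℝ) → Fin n → ℝ) (x : Fin m → ℝ) (z : Fin (n + 1) → ℝ) :
    lamhPt H (x, γ x) (Tgam L γ x z) = hgam H γ x z := rfl

end Aff
/-- if `γ` is a section of the vector bundle `τ_V^* : V* → M` and
`Tγ : Ã → T^Ã V*` is defined by `Tγ(ã) = (ã, (T_x γ)(ρ_Ã(ã)))`, then `(Tγ, γ)` is a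
morphism of Lie algebroids from `Ã → M` to `T^Ã V* → V*` (pullback commutes with the
differentials on functions and on 1-forms, which characterizes the morphism property),
and moreover `(Tγ,γ)^* λ_h = h ∘ γ` and `(Tγ,γ)^*(Ω_h) = −d^Ã(h ∘ γ)`, where `h ∘ γ`
is viewed as a section of `Ã*` via `A⁺ = Ã*`. -/
theorem Tgamma_morphism_and_pullbacks {m n : ℕ} (L : CoordLieAlgebroid m (n + 1))
    (hc0 : ∀ x a b, L.c x a b 0 = 0)
    (H : VStar m n → ℝ) (hH : ContDiff ℝ (⊤ : ℕ∞) H)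
    (γ : (Fin m → ℝ) → Fin n → ℝ) (hγ : ContDiff ℝ (⊤ : ℕ∞) γ) :
    -- morphism, degree 0: for every function `F` on `V*`
    (∀ F : VStar m n → ℝ, ContDiff ℝ (⊤ : ℕ∞) F →
      ∀ (x : Fin m → ℝ) (z : Fin (n + 1) → ℝ),
        fderiv ℝ (fun x' => F (x', γ x')) x (avecA L x z)
          = fderiv ℝ F (x, γ x) (avec L (x, γ x) (Tgam L γ x z)))
    -- morphism, degree 1: for every 1-form `θ` on `T^Ã V* → V*`
    ∧ (∀ θ : VStar m n → AFib n → ℝ,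
        (∀ p, IsLinearMap ℝ (θ p)) → (∀ w, ContDiff ℝ (⊤ : ℕ∞) (fun p => θ p w)) →
        ∀ (x : Fin m → ℝ) (z z' : Fin (n + 1) → ℝ),
          dptA L (fun x' z₀ => θ (x', γ x') (Tgam L γ x' z₀)) x z z'
            = dptV L θ (x, γ x) (Tgam L γ x z) (Tgam L γ x z'))
    -- `(Tγ,γ)^* λ_h = h ∘ γ`
    ∧ (∀ (x : Fin m → ℝ) (z : Fin (n + 1) → ℝ),
        lamhPt H (x, γ x) (Tgam L γ x z) = hgam H γ x z)
    -- `(Tγ,γ)^* Ω_h = −d^Ã (h ∘ γ)`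
    ∧ (∀ (x : Fin m → ℝ) (z z' : Fin (n + 1) → ℝ),
        OmegahPt L H (x, γ x) (Tgam L γ x z) (Tgam L γ x z')
          = -dptA L (hgam H γ) x z z') := by
  refine ⟨?_, ?_, ?_, ?_⟩
  · intro F hF x z
    exact part1 L γ hγ F x z (hF.differentiable (by simp) _)
  · intro θ hlin hsm x z z'
    exact part2 L γ hγ θ hlin hsm x z z'
  · intro x z
    exact part3 L H γ x z
  · intro x z z'
    have he : (fun x' z₀ => lamhPt H (x', γ x') (Tgam L γ x' z₀)) = hgam H γ :=
      funext fun x' => funext fun z₀ => part3 L H γ x' z₀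
    rw [omegahPt_eq_dptV,
      ← part2 L γ hγ (lamhPt H) (lamhPt_linear H) (lamhPt_smooth H hH) x z z', he]
end
end
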